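/- Fix positive constants q0, γ, kB, T0, T1, ω and set g = √(γ²ω² + 4q0²). Over all sinusoidal controls u(t) = q1 cos(ω t − φ), the second-order average power P(q1, φ) = (kB ω q1/(2g)) (T1 sin(φ + θ) − (γ T0 ω q1)/(g q0)), where θ = arctan(2q0/(γω)), is uniquely maximized at q1* = q0 g T1/(2 γ ω T0) and φ* = π/2 − θ, with maximum value kB q0 T1²/(8 γ T0). -/

import Mathlib

/-!
Writing `P(q, φ) = A q (T1 sin(φ + θ) - B q)` with `A = kB ω/(2g)` and `B = γ T0 ω/(g q0)`,
the phase enters only through `sin(φ + θ) ≤ 1`, and at `sin(φ + θ) = 1` the remaining quadratic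
`A q (T1 - B q) = A (T1²/(4B) - B (q - T1/(2B))²)` peaks at `q = T1/(2B)`. Equality forces
`q = T1/(2B) > 0`, hence `sin(φ + θ) = 1`, which pins `φ = π/2 - θ` in `[0, 2π)`.
-/

open Real Set

lemma mul_mul_sub_le_sq_div {A B T q s : ℝ} (hA : 0 ≤ A) (hB : 0 < B) (hT : 0 ≤ T)
    (hq : 0 ≤ q) (hs : s ≤ 1) :
    A * q * (T * s - B * q) ≤ A * T ^ 2 / (4 * B) := by
  have hphase : A * q * (T * s - B * q) ≤ A * q * (T - B * q) := by
    gcongr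
    nlinarith
  have hsq : A * q * (T - B * q) = A * T ^ 2 / (4 * B) - A * B * (q - T / (2 * B)) ^ 2 := by
    field_simp
    ring
  have : 0 ≤ A * B * (q - T / (2 * B)) ^ 2 := by positivity
  linarith

lemma mul_mul_sub_eq_sq_div_iff {A B T q s : ℝ} (hA : 0 < A) (hB : 0 < B) (hT : 0 < T)
    (hq : 0 ≤ q) (hs : s ≤ 1) :
    A * q * (T * s - B * q) = A * T ^ 2 / (4 * B) ↔ q = T / (2 * B) ∧ s = 1 := by
  constructor
  · intro h
    have hsplit : A * T ^ 2 / (4 * B) - A * q * (T * s - B * q) =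
        A * q * T * (1 - s) + A * B * (q - T / (2 * B)) ^ 2 := by
      field_simp
      ring
    have hphase : 0 ≤ A * q * T * (1 - s) := by
      have : 0 ≤ 1 - s := by linarith
      positivity
    have hquad : 0 ≤ A * B * (q - T / (2 * B)) ^ 2 := by positivity
    have hq_eq : q = T / (2 * B) := by
      have : A * B * (q - T / (2 * B)) ^ 2 = 0 := by linarith
      have := pow_eq_zero_iff two_ne_zero |>.mp
        ((mul_eq_zero.mp this).resolve_left (by positivity))
      linarith
    refine ⟨hq_eq, ?_⟩
    have : A * q * T * (1 - s) = 0 := by linarith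
    have hAqT : A * q * T ≠ 0 := by rw [hq_eq]; positivity
    linarith [(mul_eq_zero.mp this).resolve_left hAqT]
  · rintro ⟨rfl, rfl⟩
    field_simp
    ring

lemma eq_pi_div_two_of_sin_eq_one {x : ℝ} (h₁ : -(3 * π / 2) < x) (h₂ : x < 5 * π / 2)
    (hx : sin x = 1) : x = π / 2 := by
  obtain ⟨k, rfl⟩ := Real.sin_eq_one_iff.mp hx
  have hk₁ : (k : ℝ) < 1 := by nlinarith [pi_pos]
  have hk₂ : (-1 : ℝ) < k := by nlinarith [pi_pos]
  obtain rfl : k = 0 := by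
    have : k < 1 := by exact_mod_cast hk₁
    have : -1 < k := by exact_mod_cast hk₂
    omega
  simp

/-- The second-order average power for sinusoidal controls in the overdamped model,
`P(q1, φ) = (kB ω q1/(2g)) (T1 sin(φ + θ) − (γ T0 ω q1)/(g q0))` with
`g = √(γ²ω² + 4q0²)` and `θ = arctan(2q0/(γω))`, is uniquely maximized over
`q1 ≥ 0`, `φ ∈ [0, 2π)` at `q1* = q0 g T1/(2γω T0)`, `φ* = π/2 − θ`, with maximum
value `kB q0 T1²/(8 γ T0)`. -/
theorem stmt4 (q0 γ kB T0 T1 ω : ℝ) (hq0 : 0 < q0) (hγ : 0 < γ) (hkB : 0 < kB)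
    (hT0 : 0 < T0) (hT1 : 0 < T1) (hω : 0 < ω) :
    let g : ℝ := Real.sqrt (γ ^ 2 * ω ^ 2 + 4 * q0 ^ 2)
    let θ : ℝ := Real.arctan (2 * q0 / (γ * ω))
    let P : ℝ → ℝ → ℝ := fun q1 φ =>
      (kB * ω * q1 / (2 * g)) * (T1 * Real.sin (φ + θ) - γ * T0 * ω * q1 / (g * q0))
    let q1star : ℝ := q0 * g * T1 / (2 * γ * ω * T0)
    let φstar : ℝ := π / 2 - θ
    q1star ∈ Ici (0 : ℝ) ∧ φstar ∈ Ico 0 (2 * π) ∧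
    P q1star φstar = kB * q0 * T1 ^ 2 / (8 * γ * T0) ∧
    (∀ q1 ∈ Ici (0 : ℝ), ∀ φ ∈ Ico 0 (2 * π),
      P q1 φ ≤ kB * q0 * T1 ^ 2 / (8 * γ * T0)) ∧
    (∀ q1 ∈ Ici (0 : ℝ), ∀ φ ∈ Ico 0 (2 * π),
      P q1 φ = kB * q0 * T1 ^ 2 / (8 * γ * T0) → q1 = q1star ∧ φ = φstar) := by
  intro g θ P q1star φstar
  have hg : 0 < g := Real.sqrt_pos.mpr (by positivity)
  have hθ₀ : 0 < θ := arctan_pos.mpr (by positivity)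
  have hθ₁ : θ < π / 2 := arctan_lt_pi_div_two _
  set A := kB * ω / (2 * g)
  set B := γ * T0 * ω / (g * q0)
  have hA : 0 < A := by positivity
  have hB : 0 < B := by positivity
  have hP : ∀ q1 φ, P q1 φ = A * q1 * (T1 * sin (φ + θ) - B * q1) := fun q1 φ => by
    simp only [P, A, B]; ring
  have hmax : kB * q0 * T1 ^ 2 / (8 * γ * T0) = A * T1 ^ 2 / (4 * B) := by
    simp only [A, B]; field_simp; ring
  have hq1star : q1star = T1 / (2 * B) := by
    simp only [q1star, B]; field_simp
  have hφstar : φstar = π / 2 - θ := rfl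
  refine ⟨mem_Ici.mpr (by positivity), ⟨by linarith, by linarith [pi_pos]⟩, ?_, ?_, ?_⟩
  · rw [hP, hmax, mul_mul_sub_eq_sq_div_iff hA hB hT1 (by positivity) (sin_le_one _)]
    exact ⟨hq1star, by rw [hφstar, sub_add_cancel, sin_pi_div_two]⟩
  · intro q1 hq1 φ _
    rw [hP, hmax]
    exact mul_mul_sub_le_sq_div hA.le hB hT1.le hq1 (sin_le_one _)
  · intro q1 hq1 φ hφ h
    rw [hP, hmax, mul_mul_sub_eq_sq_div_iff hA hB hT1 hq1 (sin_le_one _)] at h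
    refine ⟨h.1.trans hq1star.symm, ?_⟩
    have hφθ : φ + θ = π / 2 :=
      eq_pi_div_two_of_sin_eq_one (by linarith [hφ.1, pi_pos]) (by linarith [hφ.2]) h.2
    linarith
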